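/- arXiv:0709.1456 — 4 statements merged into one kernel-verified Lean document; each statement's English description precedes it below -/
import Mathlib

section
/- Let h : ℝ̄ → ℝ̄ be non-decreasing and right-continuous, and define its generalized inverse h⁻¹(x) := inf{t ∈ ℝ̄ : h(t) > x}. Then for every t ∈ ℝ̄ the following chain of inequalities holds: h⁻¹(h(t−)−) ≤ h⁻¹(h(t)−) ≤ t ≤ h⁻¹(h(t−)) ≤ h⁻¹(h(t)), where for a non-decreasing function f : ℝ̄ → ℝ̄ the left limit is f(x−) := sup{f(y) : y < x} (with sup ∅ = −∞). -/
/-! The two middle inequalities hold for every `h`: if `x < h t` then `t` lies in the set whose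
infimum is `h⁻¹(x)`, and no `s < t` satisfies `h(t−) < h s`. The outer two follow from
`h(t−) ≤ h(t)` because `h⁻¹` and left values are monotone. -/

/-- The generalized inverse of `h : ℝ̄ → ℝ̄`, `h⁻¹(x) = inf {t | h t > x}`. -/
noncomputable def genInv (h : EReal → EReal) (x : EReal) : EReal :=
  sInf {t : EReal | x < h t}

/-- Left value `f(x−) = sup {f y | y < x}` of `f : ℝ̄ → ℝ̄` (with `sup ∅ = −∞`). -/
noncomputable def leftVal (f : EReal → EReal) (x : EReal) : EReal :=
  sSup (f '' Set.Iio x)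

theorem genInv_mono (h : EReal → EReal) : Monotone (genInv h) :=
  fun _ _ hxy => sInf_le_sInf fun _ hu => hxy.trans_lt hu

theorem genInv_le_of_lt {h : EReal → EReal} {x t : EReal} (hx : x < h t) : genInv h x ≤ t :=
  sInf_le hx

theorem leftVal_mono (f : EReal → EReal) : Monotone (leftVal f) :=
  fun _ _ hxy => sSup_le_sSup (Set.image_mono (Set.Iio_subset_Iio hxy))

theorem le_leftVal_of_lt (f : EReal → EReal) {x y : EReal} (hy : y < x) : f y ≤ leftVal f x :=
  le_sSup (Set.mem_image_of_mem f hy)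

theorem Monotone.leftVal_le {f : EReal → EReal} (hf : Monotone f) (x : EReal) :
    leftVal f x ≤ f x :=
  sSup_le <| Set.forall_mem_image.2 fun _ hy => hf (le_of_lt hy)

theorem leftVal_genInv_apply_le (h : EReal → EReal) (t : EReal) :
    leftVal (genInv h) (h t) ≤ t :=
  sSup_le <| Set.forall_mem_image.2 fun _ hx => genInv_le_of_lt hx

theorem le_genInv_leftVal (h : EReal → EReal) (t : EReal) : t ≤ genInv h (leftVal h t) :=
  le_sInf fun _ hu => not_lt.1 fun hut => (le_leftVal_of_lt h hut).not_gt hu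

theorem genInv_chain_general (h : EReal → EReal)
    (hmono : Monotone h)
    (t : EReal) :
    leftVal (genInv h) (leftVal h t) ≤ leftVal (genInv h) (h t) ∧
      leftVal (genInv h) (h t) ≤ t ∧
        t ≤ genInv h (leftVal h t) ∧
          genInv h (leftVal h t) ≤ genInv h (h t) :=
  ⟨leftVal_mono _ (hmono.leftVal_le t), leftVal_genInv_apply_le h t, le_genInv_leftVal h t,
    genInv_mono h (hmono.leftVal_le t)⟩

/-- For `h : ℝ̄ → ℝ̄` non-decreasing and right-continuous, the chain of inequalities
`h⁻¹(h(t−)−) ≤ h⁻¹(h(t)−) ≤ t ≤ h⁻¹(h(t−)) ≤ h⁻¹(h(t))` holds for all `t`. -/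
theorem genInv_chain (h : EReal → EReal)
    (hmono : Monotone h)
    (hrc : ∀ x : EReal, ContinuousWithinAt h (Set.Ici x) x)
    (t : EReal) :
    leftVal (genInv h) (leftVal h t) ≤ leftVal (genInv h) (h t) ∧
      leftVal (genInv h) (h t) ≤ t ∧
        t ≤ genInv h (leftVal h t) ∧
          genInv h (leftVal h t) ≤ genInv h (h t) :=
  genInv_chain_general h hmono t
end

section
/- The Skorokhod reflection maps form a flow (semigroup property): for every W : ℝ → ℝ bounded on every compact interval, every x ≥ 0 and all reals s ≤ u ≤ t, one has R_{s,t}W(x) = R_{u,t}W( R_{s,u}W(x) ); moreover R_{t,t}W(x) = x for all t ∈ ℝ and x ≥ 0. -/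
/-!
Writing `m(s,t) = inf_{[s,t]} W`, the reflection map is
`R_{s,t}W(x) = W t - min (m(s,t)) (W s - x)`. Since `m(s,t) = min (m(s,u)) (m(u,t))` for
`s ≤ u ≤ t`, the flow property reduces to the associativity and commutativity of `min`.
-/

/-- The Skorokhod reflection map
`R_{s,t}W(x) = max( sup_{u ∈ [s,t]} (W t − W u), x + W t − W s )`. -/
noncomputable def skorokhod (W : ℝ → ℝ) (s t x : ℝ) : ℝ :=
  max (sSup ((fun u => W t - W u) '' Set.Icc s t)) (x + W t - W s)

/-- A function `W : ℝ → ℝ` is bounded on every compact interval. -/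
def BddOnCompacts (W : ℝ → ℝ) : Prop :=
  ∀ a b : ℝ, ∃ C : ℝ, ∀ u ∈ Set.Icc a b, |W u| ≤ C

open Set

namespace BddOnCompacts

variable {W : ℝ → ℝ}

theorem bddBelow_image_Icc (hW : BddOnCompacts W) (a b : ℝ) : BddBelow (W '' Icc a b) := by
  obtain ⟨C, hC⟩ := hW a b
  refine ⟨-C, ?_⟩
  rintro _ ⟨u, hu, rfl⟩
  exact neg_le_of_abs_le (hC u hu)

theorem sInf_image_Icc_eq_min (hW : BddOnCompacts W) {s u t : ℝ} (hsu : s ≤ u) (hut : u ≤ t) :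
    sInf (W '' Icc s t) = min (sInf (W '' Icc s u)) (sInf (W '' Icc u t)) := by
  rw [← Icc_union_Icc_eq_Icc hsu hut, image_union]
  exact csInf_union (hW.bddBelow_image_Icc s u) ((nonempty_Icc.2 hsu).image W)
    (hW.bddBelow_image_Icc u t) ((nonempty_Icc.2 hut).image W)

theorem skorokhod_eq (hW : BddOnCompacts W) {s t : ℝ} (hst : s ≤ t) (x : ℝ) :
    skorokhod W s t x = W t - min (sInf (W '' Icc s t)) (W s - x) := by
  have hsup : sSup ((fun u => W t - W u) '' Icc s t) = W t - sInf (W '' Icc s t) := by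
    rw [Antitone.map_csInf_of_continuousAt (continuous_sub_left (W t)).continuousAt
      (fun _ _ h => sub_le_sub_left h _) ((nonempty_Icc.2 hst).image W)
      (hW.bddBelow_image_Icc s t), image_image]
  rw [skorokhod, hsup, ← max_sub_sub_left]
  congr 1
  ring

theorem skorokhod_skorokhod (hW : BddOnCompacts W) {s u t : ℝ} (hsu : s ≤ u) (hut : u ≤ t)
    (x : ℝ) : skorokhod W u t (skorokhod W s u x) = skorokhod W s t x := by
  rw [hW.skorokhod_eq hut, hW.skorokhod_eq hsu, hW.skorokhod_eq (hsu.trans hut),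
    hW.sInf_image_Icc_eq_min hsu hut, sub_sub_cancel, min_assoc, min_left_comm]

end BddOnCompacts

theorem skorokhod_self (W : ℝ → ℝ) (t : ℝ) {x : ℝ} (hx : 0 ≤ x) : skorokhod W t t x = x := by
  simp [skorokhod, hx]

/-- Semigroup (flow) property of the Skorokhod reflection maps:
`R_{s,t}W(x) = R_{u,t}W(R_{s,u}W(x))` for `s ≤ u ≤ t`, and `R_{t,t}W(x) = x`. -/
theorem skorokhod_flow (W : ℝ → ℝ) (hW : BddOnCompacts W) :
    (∀ x : ℝ, 0 ≤ x → ∀ s u t : ℝ, s ≤ u → u ≤ t →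
        skorokhod W s t x = skorokhod W u t (skorokhod W s u x)) ∧
      (∀ t : ℝ, ∀ x : ℝ, 0 ≤ x → skorokhod W t t x = x) :=
  ⟨fun x _ _ _ _ hsu hut => (hW.skorokhod_skorokhod hsu hut x).symm,
    fun t _ hx => skorokhod_self W t hx⟩
end

section
/- Let W : ℝ → ℝ be bounded on every compact interval and assume that for every t ∈ ℝ the set {W(t) − W(u) : u ≤ t} is bounded above, and set Z(t) := sup_{u ≤ t} (W(t) − W(u)). If Z' : ℝ → [0,∞) is any solution of the Skorokhod dynamical system driven by W, i.e. Z'(t) = R_{s,t}W(Z'(s)) for all s ≤ t, then Z'(t) ≥ Z(t) for every t ∈ ℝ; that is, Z is the minimal non-negative solution. -/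
/-- `Z t := sup_{u ≤ t} (W t − W u)` is the minimal non-negative solution of the
Skorokhod dynamical system driven by `W`: any non-negative solution `Z'`
dominates `Z` everywhere. -/
theorem skorokhod_minimal_solution (W : ℝ → ℝ) (hW : BddOnCompacts W)
    (hbdd : ∀ t : ℝ, BddAbove ((fun u => W t - W u) '' Set.Iic t))
    (Z' : ℝ → ℝ) (hZ'nonneg : ∀ t : ℝ, 0 ≤ Z' t)
    (hZ'sol : ∀ s t : ℝ, s ≤ t → Z' t = skorokhod W s t (Z' s)) :
    ∀ t : ℝ, sSup ((fun u => W t - W u) '' Set.Iic t) ≤ Z' t := by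
  intro t
  apply csSup_le ((Set.nonempty_Iic).image _)
  rintro x ⟨u, hu, rfl⟩
  have h := hZ'sol u t hu
  rw [h, skorokhod]
  calc W t - W u ≤ Z' u + W t - W u := by linarith [hZ'nonneg u]
    _ ≤ _ := le_max_right _ _
end

section
/- Let T, X, Y be real random variables on a probability space with X ≥ 0 and Y ≥ 0 almost surely, T exponentially distributed with rate λ > 0, and T independent of the pair (X, Y). Then X and T − X − Y are conditionally independent given the event {T > X + Y}: for all Borel sets A, B ⊆ ℝ, P({X ∈ A} ∩ {T − X − Y ∈ B} ∩ {T > X + Y}) · P(T > X + Y) = P({X ∈ A} ∩ {T > X + Y}) · P({T − X − Y ∈ B} ∩ {T > X + Y}). -/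
open MeasureTheory ProbabilityTheory Set

lemma shift_lemma (μ : Measure ℝ) [IsProbabilityMeasure μ] (l : ℝ)
    (hexp : ∀ t : ℝ, 0 ≤ t → μ (Set.Ioi t) = ENNReal.ofReal (Real.exp (-l * t)))
    (s : ℝ) (hs : 0 ≤ s) (B : Set ℝ) (hB : MeasurableSet B) :
    μ {t | t - s ∈ B ∧ s < t} = ENNReal.ofReal (Real.exp (-l * s)) * μ (B ∩ Set.Ioi 0) := by
  have hmeas : Measurable (fun t : ℝ => t - s) := measurable_id.sub_const s
  set c : ENNReal := ENNReal.ofReal (Real.exp (-l * s)) with hc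
  have hpre : ∀ b : ℝ, (fun t : ℝ => t - s) ⁻¹' Set.Ioi b = Set.Ioi (b + s) := by
    intro b; ext t
    simp only [Set.mem_preimage, Set.mem_Ioi]
    constructor <;> intro h <;> linarith
  haveI : IsProbabilityMeasure (μ.map (fun t : ℝ => t - s)) :=
    Measure.isProbabilityMeasure_map hmeas.aemeasurable
  set m₁ : Measure ℝ := (μ.map (fun t : ℝ => t - s)).restrict (Set.Ioi 0) with hm₁
  set m₂ : Measure ℝ := c • (μ.restrict (Set.Ioi 0)) with hm₂
  have hIoi : ∀ a : ℝ, m₁ (Set.Ioi a) = m₂ (Set.Ioi a) := by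
    intro a
    have h1 : m₁ (Set.Ioi a) = μ (Set.Ioi (max a 0 + s)) := by
      rw [hm₁, Measure.restrict_apply measurableSet_Ioi, Set.Ioi_inter_Ioi,
        Measure.map_apply hmeas measurableSet_Ioi, hpre]
    have h2 : m₂ (Set.Ioi a) = c * μ (Set.Ioi (max a 0)) := by
      rw [hm₂, Measure.smul_apply, smul_eq_mul, Measure.restrict_apply measurableSet_Ioi,
        Set.Ioi_inter_Ioi]
    rw [h1, h2, hexp _ (by positivity), hexp _ (le_max_right a 0), hc,
      ← ENNReal.ofReal_mul (Real.exp_nonneg _), ← Real.exp_add]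
    ring_nf
  have huniv : m₁ Set.univ = m₂ Set.univ := by
    have h1 : m₁ Set.univ = μ (Set.Ioi s) := by
      rw [hm₁, Measure.restrict_apply_univ, Measure.map_apply hmeas measurableSet_Ioi, hpre,
        zero_add]
    have h2 : m₂ Set.univ = c * μ (Set.Ioi 0) := by
      rw [hm₂, Measure.smul_apply, smul_eq_mul, Measure.restrict_apply_univ]
    rw [h1, h2, hexp s hs, hexp 0 le_rfl]
    simp [hc]
  haveI hf2 : IsFiniteMeasure m₂ := by
    constructor
    rw [← huniv]
    exact measure_lt_top _ _
  have hIic : ∀ a : ℝ, m₁ (Set.Iic a) = m₂ (Set.Iic a) := by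
    intro a
    have e : (Set.Ioi a)ᶜ = Set.Iic a := by simp
    rw [← e, measure_compl measurableSet_Ioi (measure_ne_top _ _),
      measure_compl measurableSet_Ioi (measure_ne_top _ _), huniv, hIoi]
  have hmeq : m₁ = m₂ := Measure.ext_of_Iic m₁ m₂ hIic
  have h1 : {t : ℝ | t - s ∈ B ∧ s < t} = (fun t : ℝ => t - s) ⁻¹' (B ∩ Set.Ioi 0) := by
    ext t
    simp only [Set.mem_setOf_eq, Set.mem_preimage, Set.mem_inter_iff, Set.mem_Ioi, sub_pos]
  rw [h1, ← Measure.map_apply hmeas (hB.inter measurableSet_Ioi)]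
  have h2 : μ.map (fun t : ℝ => t - s) (B ∩ Set.Ioi 0) = m₁ B := by
    rw [hm₁, Measure.restrict_apply hB]
  rw [h2, hmeq, hm₂, Measure.smul_apply, smul_eq_mul, Measure.restrict_apply hB]

lemma master_lemma
    {Ω : Type*} [MeasurableSpace Ω] (P : Measure Ω) [IsProbabilityMeasure P]
    (T X Y : Ω → ℝ)
    (hT : Measurable T) (hX : Measurable X) (hY : Measurable Y)
    (hXnn : ∀ᵐ ω ∂P, 0 ≤ X ω) (hYnn : ∀ᵐ ω ∂P, 0 ≤ Y ω)
    (l : ℝ) (hl : 0 < l)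
    (hexp : ∀ t : ℝ, 0 ≤ t → P {ω | t < T ω} = ENNReal.ofReal (Real.exp (-l * t)))
    (hindep : IndepFun T (fun ω => (X ω, Y ω)) P)
    (A B : Set ℝ) (hA : MeasurableSet A) (hB : MeasurableSet B) :
    P ({ω | X ω ∈ A} ∩ {ω | T ω - X ω - Y ω ∈ B} ∩ {ω | X ω + Y ω < T ω})
      = (P.map T) (B ∩ Set.Ioi 0)
        * ∫⁻ p in A ×ˢ (Set.univ : Set ℝ),
            ENNReal.ofReal (Real.exp (-l * (p.1 + p.2))) ∂(P.map fun ω => (X ω, Y ω)) := by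
  set W : Ω → ℝ × ℝ := fun ω => (X ω, Y ω) with hW
  have hWm : Measurable W := hX.prodMk hY
  set μ : Measure ℝ := P.map T with hμ
  set ν : Measure (ℝ × ℝ) := P.map W with hν
  haveI : IsProbabilityMeasure μ := Measure.isProbabilityMeasure_map hT.aemeasurable
  haveI : IsProbabilityMeasure ν := Measure.isProbabilityMeasure_map hWm.aemeasurable
  have hexpμ : ∀ t : ℝ, 0 ≤ t → μ (Set.Ioi t) = ENNReal.ofReal (Real.exp (-l * t)) := by
    intro t ht
    rw [hμ, Measure.map_apply hT measurableSet_Ioi]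
    exact hexp t ht
  have hmap : P.map (fun ω => (W ω, T ω)) = ν.prod μ :=
    (indepFun_iff_map_prod_eq_prod_map_map hWm.aemeasurable hT.aemeasurable).mp hindep.symm
  set E : Set ((ℝ × ℝ) × ℝ) :=
    {p | p.1.1 ∈ A ∧ (p.2 - p.1.1 - p.1.2 ∈ B ∧ p.1.1 + p.1.2 < p.2)} with hE
  have hEm : MeasurableSet E := by
    apply MeasurableSet.inter
    · exact (measurable_fst.comp measurable_fst) hA
    apply MeasurableSet.inter
    · exact ((measurable_snd.sub (measurable_fst.comp measurable_fst)).sub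
        (measurable_snd.comp measurable_fst)) hB
    · exact measurableSet_lt ((measurable_fst.comp measurable_fst).add
        (measurable_snd.comp measurable_fst)) measurable_snd
  have hset : {ω | X ω ∈ A} ∩ {ω | T ω - X ω - Y ω ∈ B} ∩ {ω | X ω + Y ω < T ω}
      = (fun ω => (W ω, T ω)) ⁻¹' E := by
    ext ω
    simp [hE, hW, Set.mem_setOf_eq, and_assoc]
  rw [hset, ← Measure.map_apply (hWm.prodMk hT) hEm, hmap, Measure.prod_apply hEm]
  have hνae : ∀ᵐ p ∂ν, 0 ≤ p.1 ∧ 0 ≤ p.2 := by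
    rw [hν, ae_map_iff hWm.aemeasurable
      (show MeasurableSet {p : ℝ × ℝ | 0 ≤ p.1 ∧ 0 ≤ p.2} from
        (measurableSet_le measurable_const measurable_fst).inter
          (measurableSet_le measurable_const measurable_snd))]
    filter_upwards [hXnn, hYnn] with ω h1 h2
    exact ⟨h1, h2⟩
  set cB : ENNReal := μ (B ∩ Set.Ioi 0) with hcB
  have hcong : ∀ᵐ p ∂ν, μ (Prod.mk p ⁻¹' E)
      = Set.indicator (A ×ˢ (Set.univ : Set ℝ))
          (fun p : ℝ × ℝ => cB * ENNReal.ofReal (Real.exp (-l * (p.1 + p.2)))) p := by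
    filter_upwards [hνae] with p hp
    by_cases hpA : p.1 ∈ A
    · have hsl : Prod.mk p ⁻¹' E = {t | t - (p.1 + p.2) ∈ B ∧ p.1 + p.2 < t} := by
        ext t
        simp only [hE, Set.mem_preimage, Set.mem_setOf_eq, hpA, true_and, ← sub_sub]
      rw [hsl, shift_lemma μ l hexpμ (p.1 + p.2) (by linarith [hp.1, hp.2]) B hB,
        Set.indicator_of_mem (by simp [hpA] : p ∈ A ×ˢ (Set.univ : Set ℝ))]
      ring
    · have hsl : Prod.mk p ⁻¹' E = (∅ : Set ℝ) := by
        ext t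
        simp [hE, hpA]
      rw [hsl, Set.indicator_of_notMem (by simp [hpA] : p ∉ A ×ˢ (Set.univ : Set ℝ))]
      simp
  rw [lintegral_congr_ae hcong,
    lintegral_indicator (hA.prod MeasurableSet.univ),
    lintegral_const_mul' _ _ (measure_ne_top μ _)]

/-- Let `T` be exponential with rate `λ > 0`, independent of the pair `(X, Y)` with
`X, Y ≥ 0` a.s. Then `X` and `T − X − Y` are conditionally independent given
`{T > X + Y}`. -/
theorem cond_indep_given_residual
    {Ω : Type*} [MeasurableSpace Ω] (P : Measure Ω) [IsProbabilityMeasure P]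
    (T X Y : Ω → ℝ)
    (hT : Measurable T) (hX : Measurable X) (hY : Measurable Y)
    (hXnn : ∀ᵐ ω ∂P, 0 ≤ X ω) (hYnn : ∀ᵐ ω ∂P, 0 ≤ Y ω)
    (l : ℝ) (hl : 0 < l)
    (hexp : ∀ t : ℝ, 0 ≤ t → P {ω | t < T ω} = ENNReal.ofReal (Real.exp (-l * t)))
    (hindep : IndepFun T (fun ω => (X ω, Y ω)) P) :
    ∀ A B : Set ℝ, MeasurableSet A → MeasurableSet B →
      P ({ω | X ω ∈ A} ∩ {ω | T ω - X ω - Y ω ∈ B} ∩ {ω | X ω + Y ω < T ω})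
          * P {ω | X ω + Y ω < T ω}
        = P ({ω | X ω ∈ A} ∩ {ω | X ω + Y ω < T ω})
            * P ({ω | T ω - X ω - Y ω ∈ B} ∩ {ω | X ω + Y ω < T ω}) := by
  intro A B hA hB
  have master := master_lemma P T X Y hT hX hY hXnn hYnn l hl hexp hindep
  have hAB := master A B hA hB
  have hAU := master A Set.univ hA MeasurableSet.univ
  have hUB := master Set.univ B MeasurableSet.univ hB
  have hUU := master Set.univ Set.univ MeasurableSet.univ MeasurableSet.univ
  simp only [Set.mem_univ, Set.setOf_true, Set.inter_univ, Set.univ_inter,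
    Set.univ_prod_univ, Measure.restrict_univ] at hAU hUB hUU
  rw [hAB, hAU, hUB, hUU]
  ring
end
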